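/- arXiv:2202.03152 — 2 statements merged into one kernel-verified Lean document; each statement's English description precedes it below -/
import Mathlib

section
/- Let N ≥ 1 and for each i let ω_i > 0, λ_i ∈ (0,1], p_i ∈ (0,1]. With μ_i' = √(ω_i/(λ_i p_i)) / ∑_j √(ω_j/(λ_j p_j)), the bound (1/N)∑_{i=1}^N ω_i(1/(λ_i μ_i' p_i) + 1) ≤ (1/N)[ (∑_i √(ω_i/(λ_i p_i)))² + ∑_i ω_i/λ_i ] holds, where the right-hand side equals the Randomized Scheduling AoI R^{RSM} with scheduling probabilities μ_i^M = √(ω_i λ_i / p_i) / ∑_j √(ω_j/(λ_j p_j)). -/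
/-!
Both sides reduce to `Q = ∑ i, ω i / (λ i μ'_i p i)`. Writing `a i = ω i / (λ i p i)` and
`S = ∑ j, √(a j)`, each term of `Q` is `a i / (√(a i) / S) = S √(a i)`, so `Q = S²`. Since
`μM = λ μ'`, the same `Q` appears in the randomized scheduling AoI, giving the equality, and the
inequality is `ω i ≤ ω i / λ i` for `λ i ≤ 1`.
-/

open Finset

theorem div_div_sqrt_div (x S : ℝ) : x / (√x / S) = S * √x := by
  rw [div_div_eq_mul_div, mul_comm, mul_div_assoc, Real.div_sqrt]

theorem sum_div_div_sqrt_div_sum_sqrt {ι : Type*} [Fintype ι] (a : ι → ℝ) :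
    ∑ i, a i / (√(a i) / ∑ j, √(a j)) = (∑ i, √(a i)) ^ 2 := by
  simp_rw [div_div_sqrt_div, ← mul_sum, sq]

theorem Real.sqrt_mul_div_eq_mul_sqrt_div {x l y : ℝ} (hl : 0 < l) :
    √(x * l / y) = l * √(x / (l * y)) := by
  have h : x * l / y = x / (l * y) * l ^ 2 := by field_simp
  rw [h, Real.sqrt_mul' _ (sq_nonneg l), Real.sqrt_sq hl.le, mul_comm]

theorem stmt_9_general (N : ℕ) (ω lam p : Fin N → ℝ)
    (hω : ∀ i, 0 < ω i) (hlam : ∀ i, 0 < lam i ∧ lam i ≤ 1)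
    (μ' μM : Fin N → ℝ)
    (hμ' : ∀ i, μ' i
      = Real.sqrt (ω i / (lam i * p i)) / ∑ j, Real.sqrt (ω j / (lam j * p j)))
    (hμM : ∀ i, μM i
      = Real.sqrt (ω i * lam i / p i) / ∑ j, Real.sqrt (ω j / (lam j * p j))) :
    ((1 / (N : ℝ)) * ∑ i, ω i * (1 / (lam i * μ' i * p i) + 1)
      ≤ (1 / (N : ℝ)) * ((∑ i, Real.sqrt (ω i / (lam i * p i))) ^ 2
          + ∑ i, ω i / lam i)) ∧
    ((1 / (N : ℝ)) * ((∑ i, Real.sqrt (ω i / (lam i * p i))) ^ 2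
          + ∑ i, ω i / lam i)
      = (1 / (N : ℝ)) * ∑ i, ω i * (1 / lam i + 1 / (p i * μM i))) := by
  have hQ : ∑ i, ω i * (1 / (lam i * μ' i * p i))
      = (∑ i, Real.sqrt (ω i / (lam i * p i))) ^ 2 := by
    rw [← sum_div_div_sqrt_div_sum_sqrt]
    refine sum_congr rfl fun i _ => ?_
    rw [hμ' i]
    ring
  have hμM_eq : ∀ i, μM i = lam i * μ' i := fun i => by
    rw [hμM, hμ', Real.sqrt_mul_div_eq_mul_sqrt_div (hlam i).1, mul_div_assoc]
  constructor
  · refine mul_le_mul_of_nonneg_left ?_ (by positivity)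
    simp_rw [mul_add, mul_one, sum_add_distrib, hQ]
    gcongr with i
    exact le_div_self (hω i).le (hlam i).1 (hlam i).2
  · congr 1
    simp_rw [mul_add, sum_add_distrib, hμM_eq, ← mul_div_assoc, mul_one]
    have hQ' : ∑ i, ω i / (p i * (lam i * μ' i)) = ∑ i, ω i * (1 / (lam i * μ' i * p i)) :=
      sum_congr rfl fun i _ => by ring
    rw [hQ', hQ, add_comm]

theorem stmt_9 (N : ℕ) (hN : 1 ≤ N) (ω lam p : Fin N → ℝ)
    (hω : ∀ i, 0 < ω i) (hlam : ∀ i, 0 < lam i ∧ lam i ≤ 1)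
    (hp : ∀ i, 0 < p i ∧ p i ≤ 1)
    (μ' μM : Fin N → ℝ)
    (hμ' : ∀ i, μ' i
      = Real.sqrt (ω i / (lam i * p i)) / ∑ j, Real.sqrt (ω j / (lam j * p j)))
    (hμM : ∀ i, μM i
      = Real.sqrt (ω i * lam i / p i) / ∑ j, Real.sqrt (ω j / (lam j * p j))) :
    ((1 / (N : ℝ)) * ∑ i, ω i * (1 / (lam i * μ' i * p i) + 1)
      ≤ (1 / (N : ℝ)) * ((∑ i, Real.sqrt (ω i / (lam i * p i))) ^ 2
          + ∑ i, ω i / lam i)) ∧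
    ((1 / (N : ℝ)) * ((∑ i, Real.sqrt (ω i / (lam i * p i))) ^ 2
          + ∑ i, ω i / lam i)
      = (1 / (N : ℝ)) * ∑ i, ω i * (1 / lam i + 1 / (p i * μM i))) :=
  stmt_9_general N ω lam p hω hlam μ' μM hμ' hμM
end

section
/- Let λ ∈ (0,1], γ = 1-λ, p ∈ [0,1], and k, m positive integers with D = k+m. Under the LOC belief-MDP transition from state (k,m) with the node scheduled (probabilities p·λγ^{d-1} to (d,1) for d ≤ m, p·γ^m to (k+m,1), and 1-p to (k,m+1)), the expected next destination AoI (k'+m' of the next state) equals D + 1 - p·G(k,m), where G(k,m) = m + (1-γ^m)(k - 1/λ). -/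
lemma aux_sum (lam : ℝ) (hlam : lam ≠ 0) (m : ℕ) :
    ∑ d ∈ Finset.Icc 1 m, lam * (1 - lam) ^ (d - 1) * ((d : ℝ) + 1)
      = (1 - (1 - lam) ^ m) * (1 + 1 / lam) - m * (1 - lam) ^ m := by
  induction m with
  | zero => simp
  | succ n ih =>
      rw [Finset.sum_Icc_succ_top (Nat.one_le_iff_ne_zero.mpr (Nat.succ_ne_zero n)), ih]
      simp only [Nat.add_sub_cancel, Nat.cast_succ, pow_succ]
      field_simp
      ring

theorem stmt_15 (lam p : ℝ) (hlam0 : 0 < lam) (hlam1 : lam ≤ 1)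
    (hp : p ∈ Set.Icc (0:ℝ) 1)
    (k m : ℕ) (hk : 1 ≤ k) (hm : 1 ≤ m) :
    ∑ d ∈ Finset.Icc 1 m, p * lam * (1 - lam) ^ (d - 1) * ((d : ℝ) + 1)
      + p * (1 - lam) ^ m * ((k : ℝ) + m + 1)
      + (1 - p) * ((k : ℝ) + (m + 1))
    = ((k : ℝ) + m) + 1
        - p * ((m : ℝ) + (1 - (1 - lam) ^ m) * ((k : ℝ) - 1 / lam)) := by
  have hlam : lam ≠ 0 := ne_of_gt hlam0
  have h : ∑ d ∈ Finset.Icc 1 m, p * lam * (1 - lam) ^ (d - 1) * ((d : ℝ) + 1)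
      = p * ∑ d ∈ Finset.Icc 1 m, lam * (1 - lam) ^ (d - 1) * ((d : ℝ) + 1) := by
    rw [Finset.mul_sum]; congr 1; ext d; ring
  rw [h, aux_sum lam hlam]
  field_simp
  ring
end
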